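/- Let f be a homeomorphism of a compact metric space that is strongly measure expansive with constant δ, and suppose f has the shadowing property. Then for ε = δ/2, every periodic point p satisfies W^s_ε(p) ⊆ W^s(p): if d(f^i(y), f^i(p)) ≤ ε for all i ≥ 0, then d(f^i(y), f^i(p)) → 0 as i → ∞. -/

import Mathlib

open MeasureTheory Filter Metric Topology

variable {X : Type*}

/-- Iterate of a homeomorphism by an integer. -/
noncomputable def zit [TopologicalSpace X] (f : X ≃ₜ X) (i : ℤ) (x : X) : X :=
  (f.toEquiv ^ i) x

/-- The dynamical ball `Γ_δ(x)` of a homeomorphism. -/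
def Gamma [MetricSpace X] (f : X ≃ₜ X) (δ : ℝ) (x : X) : Set X :=
  {y | ∀ i : ℤ, dist (zit f i x) (zit f i y) ≤ δ}

/-- Shadowing property for one-sided (ℕ-indexed) pseudo-orbits. -/
def ShadowingN [MetricSpace X] (f : X → X) : Prop :=
  ∀ ε > (0 : ℝ), ∃ δ > (0 : ℝ), ∀ x : ℕ → X,
    (∀ i, dist (f (x i)) (x (i + 1)) < δ) →
    ∃ y, ∀ i, dist (f^[i] y) (x i) < ε

/-- Shadowing property for two-sided (ℤ-indexed) pseudo-orbits of a homeomorphism. -/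
def ShadowingZ [MetricSpace X] (f : X ≃ₜ X) : Prop :=
  ∀ ε > (0 : ℝ), ∃ δ > (0 : ℝ), ∀ x : ℤ → X,
    (∀ i, dist (f (x i)) (x (i + 1)) < δ) →
    ∃ y, ∀ i, dist (zit f i y) (x i) < ε

/-- Local weak specification property. -/
def LocalWeakSpec [MetricSpace X] (f : X → X) : Prop :=
  ∀ ε > (0 : ℝ), ∃ N : ℕ, ∃ δ > (0 : ℝ), ∀ n, N ≤ n → ∀ (k : ℕ) (x : ℕ → X),
    (∀ i, i + 1 < k → dist (f^[n] (x i)) (x (i + 1)) < δ) →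
    ∃ y, ∀ i < k, ∀ j, i * n ≤ j → j < (i + 1) * n →
      dist (f^[j] y) (f^[j - i * n] (x i)) < ε

/-- Local specification property (tracing point is periodic when the chain closes up). -/
def LocalSpec [MetricSpace X] (f : X → X) : Prop :=
  ∀ ε > (0 : ℝ), ∃ N : ℕ, ∃ δ > (0 : ℝ), ∀ n, N ≤ n → ∀ k, 1 ≤ k → ∀ x : ℕ → X,
    (∀ i < k, dist (f^[n] (x i)) (x ((i + 1) % k)) < δ) →
    ∃ y, f^[k * n] y = y ∧ ∀ i < k, ∀ j, i * n ≤ j → j < (i + 1) * n →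
      dist (f^[j] y) (f^[j - i * n] (x i)) < ε

/-- A point is periodic for `f`. -/
def IsPeriodicPt' (f : X → X) (y : X) : Prop := ∃ m, 1 ≤ m ∧ f^[m] y = y

/-- Periodic shadowing property for one-sided pseudo-orbits. -/
def PeriodicShadowingN [MetricSpace X] (f : X → X) : Prop :=
  ∀ ε > (0 : ℝ), ∃ δ > (0 : ℝ), ∀ x : ℕ → X,
    (∀ i, dist (f (x i)) (x (i + 1)) < δ) →
    (∃ M, 1 ≤ M ∧ ∀ i, x (i + M) = x i) →
    ∃ y, IsPeriodicPt' f y ∧ ∀ i, dist (f^[i] y) (x i) < ε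

/-- Periodic shadowing property for two-sided pseudo-orbits of a homeomorphism. -/
def PeriodicShadowingZ [MetricSpace X] (f : X ≃ₜ X) : Prop :=
  ∀ ε > (0 : ℝ), ∃ δ > (0 : ℝ), ∀ x : ℤ → X,
    (∀ i, dist (f (x i)) (x (i + 1)) < δ) →
    (∃ M : ℕ, 1 ≤ M ∧ ∀ i, x (i + M) = x i) →
    ∃ y, IsPeriodicPt' f y ∧ ∀ i, dist (zit f i y) (x i) < ε

/-- Strong periodic shadowing: the shadowing point has the same period as the pseudo-orbit. -/
def StrongPeriodicShadowingZ [MetricSpace X] (f : X ≃ₜ X) : Prop :=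
  ∀ ε > (0 : ℝ), ∃ δ > (0 : ℝ), ∀ (N : ℕ), 1 ≤ N → ∀ x : ℤ → X,
    (∀ i, dist (f (x i)) (x (i + 1)) < δ) →
    (∀ i, x (i + N) = x i) →
    ∃ y, f^[N] y = y ∧ ∀ i, dist (zit f i y) (x i) < ε

/-- Topological transitivity of a homeomorphism (some point has dense two-sided orbit). -/
def TransitiveZ [TopologicalSpace X] (f : X ≃ₜ X) : Prop :=
  ∃ x : X, Dense (Set.range fun n : ℤ => zit f n x)

/-- Measure expansiveness of a homeomorphism. -/
def MeasExpansive [MetricSpace X] [MeasurableSpace X] (f : X ≃ₜ X) : Prop :=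
  ∃ δ > (0 : ℝ), ∀ μ : Measure X, IsProbabilityMeasure μ →
    MeasurePreserving f μ μ → (∀ z : X, μ {z} = 0) →
    ∀ x : X, μ (Gamma f δ x) = 0

/-- Strong measure expansiveness of a homeomorphism. -/
def StrongMeasExpansive [MetricSpace X] [MeasurableSpace X] (f : X ≃ₜ X) : Prop :=
  ∃ δ > (0 : ℝ), ∀ μ : Measure X, IsProbabilityMeasure μ →
    MeasurePreserving f μ μ → ∀ x : X, μ (Gamma f δ x) = μ {x}

/-- Strong measure expansiveness with a specified constant. -/
def StrongMeasExpansiveWith [MetricSpace X] [MeasurableSpace X] (f : X ≃ₜ X) (δ : ℝ) : Prop :=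
  ∀ μ : Measure X, IsProbabilityMeasure μ →
    MeasurePreserving f μ μ → ∀ x : X, μ (Gamma f δ x) = μ {x}

/-! The normalized counting measure on a periodic orbit is invariant and charges every orbit
point, so strong measure expansiveness forces `Γ_{δ/2}(q) = {q}` for a periodic point `q`:
a second point `z` would lie in `Γ_δ(q)` while `q ∈ Γ_δ(z)`, whence `μ {z} = 0` and then
`μ {q} ≤ μ {z} = 0`. If `y` stays `δ/2`-close to the orbit of `p`, every subsequential limit
`(z, q)` of `(fⁿ y, fⁿ p)` has `q` periodic and `z ∈ Γ_{δ/2}(q)`, so `z = q`; by compactness,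
`d(fⁿ y, fⁿ p) → 0`. -/

open scoped ENNReal
open Function

section Iterates

variable [TopologicalSpace X]

theorem zit_eq_coe_zpow (f : X ≃ₜ X) (i : ℤ) : zit f i = ⇑(f ^ i) := by
  let toPerm : (X ≃ₜ X) →* Equiv.Perm X :=
    { toFun := Homeomorph.toEquiv, map_one' := rfl, map_mul' := fun _ _ => rfl }
  exact congrArg DFunLike.coe (map_zpow toPerm f i).symm

theorem continuous_zit (f : X ≃ₜ X) (i : ℤ) : Continuous (zit f i) := by
  rw [zit_eq_coe_zpow]
  exact (f ^ i).continuous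

theorem zit_add (f : X ≃ₜ X) (i j : ℤ) (x : X) : zit f (i + j) x = zit f i (zit f j x) := by
  simp only [zit_eq_coe_zpow, zpow_add, Homeomorph.mul_apply]

theorem zit_natCast (f : X ≃ₜ X) (n : ℕ) (x : X) : zit f n x = f^[n] x := by
  simp only [zit, zpow_natCast]
  rfl

theorem zit_iterate (f : X ≃ₜ X) {j : ℤ} {n : ℕ} (h : 0 ≤ n + j) (x : X) :
    zit f j (f^[n] x) = f^[(n + j).toNat] x := by
  rw [← zit_natCast, ← zit_natCast, ← zit_add]
  congr 1
  omega

end Iterates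

section PeriodicOrbitMeasure

variable [MeasurableSpace X]

noncomputable def periodicOrbitMeasure (f : X → X) (M : ℕ) (q : X) : Measure X :=
  (M : ℝ≥0∞)⁻¹ • ∑ i ∈ Finset.range M, Measure.dirac (f^[i] q)

theorem isProbabilityMeasure_periodicOrbitMeasure (f : X → X) {M : ℕ} (hM : 0 < M) (q : X) :
    IsProbabilityMeasure (periodicOrbitMeasure f M q) := by
  constructor
  simp [periodicOrbitMeasure, ENNReal.inv_mul_cancel (Nat.cast_ne_zero.2 hM.ne')]

theorem measurePreserving_periodicOrbitMeasure {f : X → X} (hf : Measurable f) {M : ℕ} {q : X}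
    (hq : IsPeriodicPt f M q) :
    MeasurePreserving f (periodicOrbitMeasure f M q) (periodicOrbitMeasure f M q) := by
  refine ⟨hf, ?_⟩
  have hshift : ∑ i ∈ Finset.range M, Measure.dirac (f^[i + 1] q) =
      ∑ i ∈ Finset.range M, Measure.dirac (f^[i] q) := by
    cases M with
    | zero => simp
    | succ m => rw [Finset.sum_range_succ, Finset.sum_range_succ', hq.eq, iterate_zero_apply]
  rw [periodicOrbitMeasure, Measure.map_smul, ← Measure.mapₗ_apply_of_measurable hf, map_sum]
  simp only [Measure.mapₗ_apply_of_measurable hf, Measure.map_dirac' hf, ← iterate_succ_apply']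
  rw [hshift]

theorem periodicOrbitMeasure_singleton_ne_zero (f : X → X) {M : ℕ} (hM : 0 < M) (q : X) :
    periodicOrbitMeasure f M q {q} ≠ 0 := by
  have hq : (1 : ℝ≥0∞) ≤ ∑ i ∈ Finset.range M, Measure.dirac (f^[i] q) {q} :=
    calc (1 : ℝ≥0∞) = Measure.dirac (f^[0] q) {q} :=
          (Measure.dirac_apply_of_mem (Set.mem_singleton q)).symm
      _ ≤ _ := Finset.single_le_sum (f := fun i => Measure.dirac (f^[i] q) {q})
          (fun _ _ => zero_le) (Finset.mem_range.2 hM)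
  simp only [periodicOrbitMeasure, Measure.smul_apply, Measure.coe_finsetSum,
    Finset.sum_apply, smul_eq_mul]
  exact mul_ne_zero (ENNReal.inv_ne_zero.2 (ENNReal.natCast_ne_top M))
    (one_pos.trans_le hq).ne'

end PeriodicOrbitMeasure

section Gamma

variable [MetricSpace X]

theorem mem_Gamma_comm {f : X ≃ₜ X} {δ : ℝ} {x y : X} : y ∈ Gamma f δ x ↔ x ∈ Gamma f δ y := by
  simp only [Gamma, Set.mem_ofPred_eq, dist_comm]

theorem self_mem_Gamma (f : X ≃ₜ X) {δ : ℝ} (hδ : 0 ≤ δ) (x : X) : x ∈ Gamma f δ x :=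
  fun i => by simpa using hδ

theorem Gamma_mono (f : X ≃ₜ X) {δ δ' : ℝ} (h : δ ≤ δ') (x : X) : Gamma f δ x ⊆ Gamma f δ' x :=
  fun _ hy i => (hy i).trans h

theorem mem_Gamma_of_tendsto {f : X ≃ₜ X} {ε : ℝ} {y p z q : X}
    (hy : ∀ i : ℕ, dist (f^[i] y) (f^[i] p) ≤ ε) {ι : Type*} {l : Filter ι} [l.NeBot]
    {n : ι → ℕ} (hn : Tendsto n l atTop) (hz : Tendsto (fun k => f^[n k] y) l (𝓝 z))
    (hq : Tendsto (fun k => f^[n k] p) l (𝓝 q)) : z ∈ Gamma f ε q := by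
  intro j
  have hlim := (((continuous_zit f j).tendsto q).comp hq).dist
    (((continuous_zit f j).tendsto z).comp hz)
  refine le_of_tendsto hlim ?_
  filter_upwards [hn.eventually_ge_atTop (-j).toNat] with k hk
  have hkj : 0 ≤ (n k : ℤ) + j := by omega
  simpa only [Function.comp_apply, zit_iterate f hkj, dist_comm] using hy _

end Gamma

section StrongMeasExpansive

variable [MetricSpace X] [MeasurableSpace X]

theorem StrongMeasExpansiveWith.measure_singleton_eq_zero [MeasurableSingletonClass X]
    {f : X ≃ₜ X} {δ : ℝ} (hsme : StrongMeasExpansiveWith f δ)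
    {μ : Measure X} [IsProbabilityMeasure μ]
    (hμ : MeasurePreserving f μ μ) {q z : X} (hz : z ∈ Gamma f (δ / 2) q) (hne : z ≠ q) :
    μ {q} = 0 := by
  have hδ : 0 ≤ δ := by linarith [dist_nonneg.trans (hz 0)]
  have hzq : z ∈ Gamma f δ q := Gamma_mono f (by linarith) q hz
  have hz0 : μ {z} = 0 := by
    have : μ {q} + μ {z} ≤ μ {q} + 0 :=
      calc μ {q} + μ {z} = μ ({q} ∪ {z}) :=
            (measure_union (Set.disjoint_singleton.2 hne.symm) (measurableSet_singleton z)).symm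
        _ ≤ μ (Gamma f δ q) := measure_mono <| Set.union_subset
            (Set.singleton_subset_iff.2 (self_mem_Gamma f hδ q)) (Set.singleton_subset_iff.2 hzq)
        _ = μ {q} + 0 := by rw [add_zero, hsme μ inferInstance hμ q]
    exact nonpos_iff_eq_zero.1 ((ENNReal.add_le_add_iff_left (measure_ne_top μ _)).1 this)
  refine nonpos_iff_eq_zero.1 ?_
  calc μ {q} ≤ μ (Gamma f δ z) := measure_mono (Set.singleton_subset_iff.2 (mem_Gamma_comm.1 hzq))
    _ = 0 := (hsme μ inferInstance hμ z).trans hz0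

theorem StrongMeasExpansiveWith.eq_of_mem_Gamma_half [BorelSpace X] {f : X ≃ₜ X} {δ : ℝ}
    (hsme : StrongMeasExpansiveWith f δ) {M : ℕ} (hM : 0 < M) {q : X}
    (hq : IsPeriodicPt f M q) {z : X} (hz : z ∈ Gamma f (δ / 2) q) : z = q := by
  have := isProbabilityMeasure_periodicOrbitMeasure f hM q
  by_contra hne
  exact periodicOrbitMeasure_singleton_ne_zero f hM q <| hsme.measure_singleton_eq_zero
    (measurePreserving_periodicOrbitMeasure f.continuous.measurable hq) hz hne

end StrongMeasExpansive

theorem strongMeasExpansive_local_stable_in_stable_general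
    [MetricSpace X] [CompactSpace X] [MeasurableSpace X] [BorelSpace X]
    (f : X ≃ₜ X) (δ : ℝ) (hsme : StrongMeasExpansiveWith f δ) :
    ∀ p : X, IsPeriodicPt' (⇑f) p → ∀ y : X,
      (∀ i : ℕ, dist ((⇑f)^[i] y) ((⇑f)^[i] p) ≤ δ / 2) →
      Tendsto (fun i : ℕ => dist ((⇑f)^[i] y) ((⇑f)^[i] p)) atTop (nhds 0) := by
  rintro p ⟨M, hM, hp⟩ y hy
  refine tendsto_of_subseq_tendsto fun ns hns => ?_
  obtain ⟨⟨z, q⟩, ms, hms, hlim⟩ :=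
    CompactSpace.tendsto_subseq fun k => ((⇑f)^[ns k] y, (⇑f)^[ns k] p)
  have hq : IsPeriodicPt f M q :=
    (isClosed_fixedPoints (f.continuous.iterate M)).mem_of_tendsto
      ((continuous_snd.tendsto _).comp hlim)
      (Eventually.of_forall fun k => IsPeriodicPt.apply_iterate hp _)
  have hzq : z = q := hsme.eq_of_mem_Gamma_half hM hq <|
    mem_Gamma_of_tendsto hy (hns.comp hms.tendsto_atTop)
      ((continuous_fst.tendsto _).comp hlim) ((continuous_snd.tendsto _).comp hlim)
  refine ⟨ms, ?_⟩
  simpa [hzq, Function.comp_def] using (continuous_dist.tendsto (z, q)).comp hlim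

theorem strongMeasExpansive_local_stable_in_stable
    [MetricSpace X] [CompactSpace X] [MeasurableSpace X] [BorelSpace X]
    (f : X ≃ₜ X) (δ : ℝ) (hδ : 0 < δ) (hsme : StrongMeasExpansiveWith f δ)
    (hsh : ShadowingZ f) :
    ∀ p : X, IsPeriodicPt' (⇑f) p → ∀ y : X,
      (∀ i : ℕ, dist ((⇑f)^[i] y) ((⇑f)^[i] p) ≤ δ / 2) →
      Tendsto (fun i : ℕ => dist ((⇑f)^[i] y) ((⇑f)^[i] p)) atTop (nhds 0) :=
  strongMeasExpansive_local_stable_in_stable_general f δ hsme
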